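/- arXiv:2206.10992 — 2 statements merged into one kernel-verified Lean document; each statement's English description precedes it below -/
import Mathlib

section
/- Let X be a locally compact Polish space and let G be a group acting on X by homeomorphisms. If G is topologically transitive on X and the union of the minimal sets of G is a dense proper subset of X, then G is sensitive to initial conditions with respect to every metric inducing the topology of X. -/
/-!
Suppose the action is not sensitive. Then every open set contains an open set all of whose
translates are small, so by transitivity the points of equicontinuity form a residual set, and so do
the points with dense orbit; Baire's theorem gives a point `q` of both kinds.

Approximate `q` by a point `q'` of a minimal set `M`: by equicontinuity the orbits of `q` and `q'`
stay uniformly close. Given any `y`, push `q` towards `y` along its orbit; the corresponding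
translates of `q'` stay in a compact ball around `y` and accumulate at some `z ∈ M` whose orbit
shadows that of `y`. As the orbit of `z` returns near `q'`, hence near `q`, the point `q` lies in
every orbit closure. So every orbit is dense and `X` itself is a minimal set, contradicting
properness.
-/

open Pointwise

/-- The diameter (in `ℝ≥0∞`) of a set `S` with respect to a distance function `d`. -/
noncomputable def ediamD {X : Type*} (d : X → X → ℝ) (S : Set X) : ENNReal :=
  ⨆ (y : S) (z : S), ENNReal.ofReal (d y.1 z.1)

/-- `G` is sensitive to initial conditions with respect to the distance function `d`. -/
def SensitiveOn (G : Type*) {X : Type*} [Group G] [MulAction G X] [TopologicalSpace X]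
    (d : X → X → ℝ) : Prop :=
  ∃ δ : ℝ, 0 < δ ∧ ∀ U : Set X, IsOpen U → U.Nonempty →
    ∃ g : G, ENNReal.ofReal δ ≤ ediamD d (g • U)

/-- A group `G` acting on a topological space `X` is topologically transitive. -/
def TopTransitive (G X : Type*) [Group G] [MulAction G X] [TopologicalSpace X] : Prop :=
  ∀ U V : Set X, IsOpen U → IsOpen V → U.Nonempty → V.Nonempty →
    ∃ g : G, ((g • U) ∩ V).Nonempty

/-- A minimal set of `G`: a nonempty closed `G`-invariant set in which every orbit is dense. -/
def IsMinimalSet (G : Type*) {X : Type*} [Group G] [MulAction G X] [TopologicalSpace X]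
    (M : Set X) : Prop :=
  M.Nonempty ∧ IsClosed M ∧ (∀ g : G, g • M ⊆ M) ∧
    ∀ x ∈ M, M ⊆ closure (MulAction.orbit G x)

open Set Filter Topology Metric MulAction TopologicalSpace

theorem ofReal_le_ediamD {X : Type*} (d : X → X → ℝ) {S : Set X} {a b : X} (ha : a ∈ S)
    (hb : b ∈ S) : ENNReal.ofReal (d a b) ≤ ediamD d S :=
  le_iSup₂ (f := fun y z : S => ENNReal.ofReal (d y z)) ⟨a, ha⟩ ⟨b, hb⟩

section

variable {G X : Type*} [Group G] [MulAction G X]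

theorem exists_isOpen_forall_dist_smul_lt_of_not_sensitiveOn [PseudoMetricSpace X]
    (h : ¬SensitiveOn G (dist : X → X → ℝ)) {ε : ℝ} (hε : 0 < ε) :
    ∃ U : Set X, IsOpen U ∧ U.Nonempty ∧ ∀ g : G, ∀ a ∈ U, ∀ b ∈ U, dist (g • a) (g • b) < ε := by
  unfold SensitiveOn at h
  push Not at h
  obtain ⟨U, hUo, hUne, hU⟩ := h ε hε
  refine ⟨U, hUo, hUne, fun g a ha b hb => ?_⟩
  exact (ENNReal.ofReal_lt_ofReal_iff hε).mp <|
    (ofReal_le_ediamD dist (smul_mem_smul_set ha) (smul_mem_smul_set hb)).trans_lt (hU g)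

variable [TopologicalSpace X] [ContinuousConstSMul G X]

theorem TopTransitive.eventually_residual_dense_orbit [SecondCountableTopology X]
    (htrans : TopTransitive G X) : ∀ᶠ x in residual X, Dense (orbit G x) := by
  have hB : ∀ B ∈ countableBasis X, ⋃ g : G, g • B ∈ residual X := by
    intro B hB
    have hBo : IsOpen B := isOpen_of_mem_countableBasis hB
    refine residual_of_dense_open (isOpen_iUnion fun g => hBo.smul g) ?_
    refine dense_iff_inter_open.mpr fun V hVo hVne => ?_
    obtain ⟨g, x, hxB, hxV⟩ := htrans B V hBo hVo (nonempty_of_mem_countableBasis hB) hVne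
    exact ⟨x, hxV, mem_iUnion.mpr ⟨g, hxB⟩⟩
  filter_upwards [(eventually_countable_ball (countable_countableBasis X)).mpr hB] with x hx
  refine (isBasis_countableBasis X).dense_iff.mpr fun B hB _ => ?_
  obtain ⟨g, hg⟩ := mem_iUnion.mp (hx B hB)
  exact ⟨g⁻¹ • x, mem_smul_set_iff_inv_smul_mem.mp hg, mem_orbit x g⁻¹⟩

theorem dense_orbit_of_forall_mem_closure_orbit {q : X} (hq : Dense (orbit G q))
    (hmem : ∀ y, q ∈ closure (orbit G y)) (y : X) : Dense (orbit G y) := by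
  rw [← dense_closure]
  refine hq.mono ?_
  rintro _ ⟨g, rfl⟩
  exact smul_closure_orbit_subset g y (smul_mem_smul_set (hmem y))

end

section Metric

variable {G X : Type*} [Group G] [MulAction G X] [PseudoMetricSpace X] [ContinuousConstSMul G X]

theorem TopTransitive.eventually_residual_equicontinuousAt (htrans : TopTransitive G X)
    (hshrink : ∀ ε > 0, ∃ U : Set X, IsOpen U ∧ U.Nonempty ∧
      ∀ g : G, ∀ a ∈ U, ∀ b ∈ U, dist (g • a) (g • b) < ε) :
    ∀ᶠ x in residual X, EquicontinuousAt (fun (g : G) (x : X) => g • x) x := by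
  let E : ℝ → Set X := fun ε =>
    ⋃₀ {U | IsOpen U ∧ ∀ g : G, ∀ a ∈ U, ∀ b ∈ U, dist (g • a) (g • b) < ε}
  have hE : ∀ ε > 0, E ε ∈ residual X := by
    intro ε hε
    refine residual_of_dense_open (isOpen_sUnion fun U hU => hU.1) ?_
    refine dense_iff_inter_open.mpr fun V hVo hVne => ?_
    obtain ⟨U, hUo, hUne, hU⟩ := hshrink ε hε
    obtain ⟨g, x, hxU, hxV⟩ := htrans U V hUo hVo hUne hVne
    refine ⟨x, hxV, g • U, ⟨hUo.smul g, ?_⟩, hxU⟩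
    rintro h _ ⟨a, ha, rfl⟩ _ ⟨b, hb, rfl⟩
    simpa only [smul_smul] using hU (h * g) a ha b hb
  have hall : ∀ᶠ x in residual X, ∀ n : ℕ, x ∈ E (1 / (n + 1)) :=
    eventually_countable_forall.mpr fun n => hE _ (by positivity)
  filter_upwards [hall] with x hx
  refine Metric.equicontinuousAt_iff_pair.mpr fun ε hε => ?_
  obtain ⟨n, hn⟩ := exists_nat_one_div_lt hε
  obtain ⟨U, ⟨hUo, hU⟩, hxU⟩ := hx n
  exact ⟨U, hUo.mem_nhds hxU, fun a ha b hb g => (hU g a ha b hb).trans hn⟩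

theorem exists_mem_forall_dist_smul_le {q q' y : X} {M : Set X} {ε r : ℝ} (hM : IsClosed M)
    (hMinv : ∀ g : G, g • M ⊆ M) (hq' : q' ∈ M) (hsync : ∀ g : G, dist (g • q) (g • q') ≤ ε)
    (hy : y ∈ closure (orbit G q)) (hK : IsCompact (closedBall y r)) (hεr : ε < r) :
    ∃ z ∈ M, ∀ h : G, dist (h • y) (h • z) ≤ ε := by
  obtain ⟨u, hu, hlim⟩ := mem_closure_iff_seq_limit.mp hy
  choose g hg using fun k => mem_orbit_iff.mp (hu k)
  have hball : ∀ᶠ k in atTop, g k • q' ∈ closedBall y r := by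
    filter_upwards [Metric.tendsto_nhds.mp hlim (r - ε) (by linarith)] with k hk
    have hgk : dist (g k • q') (u k) ≤ ε := by rw [dist_comm, ← hg]; exact hsync (g k)
    calc dist (g k • q') y ≤ dist (g k • q') (u k) + dist (u k) y := dist_triangle _ _ _
      _ ≤ r := by linarith
  obtain ⟨z, -, φ, hφ, hz⟩ := hK.tendsto_subseq' hball.frequently
  refine ⟨z, hM.mem_of_tendsto hz (.of_forall fun k => hMinv _ (smul_mem_smul_set hq')),
    fun h => ?_⟩
  have hu' : Tendsto (fun k => g (φ k) • q) atTop (𝓝 y) :=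
    (hlim.comp hφ.tendsto_atTop).congr fun k => (hg (φ k)).symm
  refine le_of_tendsto ((hu'.const_smul h).dist (hz.const_smul h)) (.of_forall fun k => ?_)
  simpa only [Function.comp_apply, smul_smul] using hsync (h * g (φ k))

theorem mem_closure_orbit_of_equicontinuousAt [LocallyCompactSpace X] {q y : X}
    (hq : EquicontinuousAt (fun (g : G) (x : X) => g • x) q) (hy : y ∈ closure (orbit G q))
    (hmin : q ∈ closure {x : X | ∃ M : Set X, IsMinimalSet G M ∧ x ∈ M}) :
    q ∈ closure (orbit G y) := by
  refine Metric.mem_closure_iff.mpr fun ε hε => ?_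
  obtain ⟨r, hr, hK⟩ := exists_isCompact_closedBall y
  set η := min (ε / 3) (r / 2)
  have hη : 0 < η := by positivity
  obtain ⟨δ, hδ, hq⟩ := Metric.equicontinuousAt_iff.mp hq η hη
  obtain ⟨q', ⟨M, hM, hq'M⟩, hqq'⟩ := Metric.mem_closure_iff.mp hmin δ hδ
  have hsync : ∀ g : G, dist (g • q) (g • q') ≤ η :=
    fun g => (hq q' (by rwa [dist_comm]) g).le
  obtain ⟨z, hzM, hyz⟩ := exists_mem_forall_dist_smul_le hM.2.1 hM.2.2.1 hq'M hsync hy hK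
    (by linarith [min_le_right (ε / 3) (r / 2)])
  obtain ⟨_, ⟨h, rfl⟩, hz⟩ := Metric.mem_closure_iff.mp (hM.2.2.2 z hzM hq'M) η hη
  refine ⟨h • y, mem_orbit y h, ?_⟩
  have hqq' : dist q q' ≤ η := by simpa only [one_smul] using hsync 1
  calc dist q (h • y) ≤ dist q q' + dist q' (h • z) + dist (h • z) (h • y) :=
        dist_triangle4 _ _ _ _
    _ < ε := by
      rw [dist_comm (h • z)]
      linarith [hyz h, min_le_left (ε / 3) (r / 2)]

end Metric

/-- Let `X` be a locally compact Polish space and `G` a group acting on `X` by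
homeomorphisms. If `G` is topologically transitive and the union of its minimal sets is a
dense proper subset of `X`, then `G` is sensitive to initial conditions with respect to
every metric inducing the topology of `X`. -/
theorem sensitive_of_transitive_denseMinimalSets {G X : Type*} [Group G] [MulAction G X]
    [TopologicalSpace X] [PolishSpace X] [LocallyCompactSpace X]
    (hcont : ∀ g : G, Continuous fun x : X => g • x)
    (htrans : TopTransitive G X)
    (hdense : Dense {x : X | ∃ M : Set X, IsMinimalSet G M ∧ x ∈ M})
    (hproper : {x : X | ∃ M : Set X, IsMinimalSet G M ∧ x ∈ M} ≠ Set.univ) :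
    ∀ ρ : X → X → ℝ,
      (∀ x y, ρ x y = ρ y x) →
      (∀ x y, ρ x y = 0 ↔ x = y) →
      (∀ x y z, ρ x z ≤ ρ x y + ρ y z) →
      (∀ s : Set X, IsOpen s ↔ ∀ x ∈ s, ∃ ε > 0, ∀ y, ρ x y < ε → y ∈ s) →
      SensitiveOn G ρ := by
  intro ρ hsymm hzero htri htop
  -- Its `dist` is `ρ` and its topology the given one, both definitionally.
  let _ : MetricSpace X := MetricSpace.ofDistTopology ρ (fun x => (hzero x x).mpr rfl) hsymm htri
    htop fun x y h => (hzero x y).mp h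
  have : ContinuousConstSMul G X := ⟨hcont⟩
  by_contra hsens
  obtain ⟨x₀, hx₀⟩ := (ne_univ_iff_exists_notMem _).mp hproper
  have : Nonempty X := ⟨x₀⟩
  have hgeneric := (htrans.eventually_residual_equicontinuousAt fun ε hε =>
    exists_isOpen_forall_dist_smul_lt_of_not_sensitiveOn hsens hε).and
    htrans.eventually_residual_dense_orbit
  obtain ⟨q, hq_equi, hq_dense⟩ := (dense_of_mem_residual hgeneric).nonempty
  have hdense_orbit : ∀ y : X, Dense (orbit G y) :=
    dense_orbit_of_forall_mem_closure_orbit hq_dense fun y =>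
      mem_closure_orbit_of_equicontinuousAt hq_equi (hq_dense.closure_eq ▸ mem_univ y)
        (hdense.closure_eq ▸ mem_univ q)
  have huniv : IsMinimalSet G (univ : Set X) :=
    ⟨univ_nonempty, isClosed_univ, fun _ => subset_univ _,
      fun y _ => (hdense_orbit y).closure_eq.ge⟩
  exact hx₀ ⟨univ, huniv, mem_univ x₀⟩
end

section
/- Let G be a countable group acting by homeomorphisms on a compact metrizable space X. If G is chaotic on X, then G is residually finite, and G is sensitive to initial conditions with respect to every metric inducing the topology of X. -/
/-!
A closed orbit is a countable compact space on which `G` acts transitively by homeomorphisms, so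
by Baire's theorem it has an isolated point, hence is discrete and finite. Stabilizers of points
with finite orbit have finite index, and by faithfulness every `g ≠ 1` moves a point of the dense
set of such points, which gives residual finiteness.

For sensitivity take two disjoint finite orbits at distance `> δ`: every point `q` is `δ/2`-far
from one of them. If `q` has finite orbit and `y` has dense orbit, finitely many translates of
the closure of the orbit of `y` under the finite-index stabilizer of `q` cover `X`, so this closure
meets the far orbit, and some `g` fixing `q` moves `y` to distance `> δ/4` from `q`.
-/

open Pointwise

/-- `G` is chaotic on `X`: it has a dense non-closed orbit and the union of its
closed orbits is dense. -/
def Chaotic (G X : Type*) [Group G] [MulAction G X] [TopologicalSpace X] : Prop :=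
  (∃ x : X, Dense (MulAction.orbit G x) ∧ ¬ IsClosed (MulAction.orbit G x)) ∧
  Dense (⋃ x ∈ {y : X | IsClosed (MulAction.orbit G y)}, MulAction.orbit G x)

/-- A group is residually finite if every nontrivial element avoids some normal subgroup
of finite index. -/
def ResiduallyFinite (G : Type*) [Group G] : Prop :=
  ∀ g : G, g ≠ 1 → ∃ N : Subgroup G, N.Normal ∧ N.index ≠ 0 ∧ g ∉ N

open MulAction

theorem MulAction.finiteIndex_stabilizer {G X : Type*} [Group G] [MulAction G X] {x : X}
    (hx : (orbit G x).Finite) : (stabilizer G x).FiniteIndex :=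
  ⟨(index_stabilizer G x).trans_ne (Set.ncard_ne_zero_of_mem (mem_orbit_self x) hx)⟩

theorem discreteTopology_of_isOpen_singleton_of_isPretransitive {G Y : Type*} [Group G]
    [MulAction G Y] [TopologicalSpace Y] [ContinuousConstSMul G Y] [IsPretransitive G Y] {p : Y}
    (hp : IsOpen {p}) : DiscreteTopology Y := by
  refine discreteTopology_iff_isOpen_singleton.mpr fun z => ?_
  obtain ⟨g, rfl⟩ := exists_smul_eq G p z
  simpa only [Set.smul_set_singleton] using hp.smul g

theorem finite_of_isPretransitive (G : Type*) {Y : Type*} [Group G] [MulAction G Y]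
    [TopologicalSpace Y] [ContinuousConstSMul G Y] [IsPretransitive G Y] [CompactSpace Y]
    [T2Space Y] [Countable Y] : Finite Y := by
  rcases isEmpty_or_nonempty Y with hY | hY
  · infer_instance
  obtain ⟨p, hp⟩ := nonempty_interior_of_iUnion_of_closed (f := fun p : Y => ({p} : Set Y))
    (fun _ => isClosed_singleton) (Set.iUnion_singleton_eq_range id ▸ Set.range_id)
  have : DiscreteTopology Y := discreteTopology_of_isOpen_singleton_of_isPretransitive (G := G)
    (hp.subset_singleton_iff.mp interior_subset ▸ isOpen_interior (s := {p}))
  exact finite_of_compact_of_discrete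

section Orbits

variable {G X : Type*} [Group G] [MulAction G X] [TopologicalSpace X] [ContinuousConstSMul G X]

instance MulAction.continuousConstSMul_orbit (x : X) : ContinuousConstSMul G (orbit G x) :=
  ⟨fun g => ((continuous_const_smul g).comp continuous_subtype_val).subtype_mk _⟩

theorem MulAction.finite_orbit_of_isClosed [Countable G] [CompactSpace X] [T2Space X] {x : X}
    (h : IsClosed (orbit G x)) : (orbit G x).Finite := by
  have : CompactSpace (orbit G x) := isCompact_iff_compactSpace.mp h.isCompact
  have : Countable (orbit G x) := (Set.countable_range fun g : G => g • x).to_subtype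
  exact Set.finite_coe_iff.mp (finite_of_isPretransitive G)

theorem MulAction.isClosed_fixedBy [T2Space X] (g : G) : IsClosed (fixedBy X g) :=
  isClosed_eq (continuous_const_smul g) continuous_id

theorem Group.residuallyFinite_of_dense_finite_orbits [FaithfulSMul G X] [T2Space X]
    (h : Dense {x : X | (orbit G x).Finite}) : Group.ResiduallyFinite G := by
  rw [Group.residuallyFinite_iff_exists_finiteIndex]
  intro g hg
  have hmoved : (fixedBy X g)ᶜ.Nonempty := by
    rw [Set.nonempty_compl]
    exact mt fixedBy_eq_univ_iff_eq_one.mp hg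
  obtain ⟨q, hq, hgq⟩ := h.exists_mem_open (isClosed_fixedBy g).isOpen_compl hmoved
  exact ⟨stabilizer G q, finiteIndex_stabilizer hq, hgq⟩

theorem MulAction.exists_smul_mem_closure_orbit_subgroup (H : Subgroup G) [H.FiniteIndex] {y : X}
    (hy : Dense (orbit G y)) (z : X) : ∃ g : G, g • z ∈ closure (orbit H y) := by
  have hcover : Set.univ ⊆ ⋃ c : G ⧸ H, c.out • closure (orbit H y) := by
    rw [← hy.closure_eq]
    refine closure_minimal ?_ (isClosed_iUnion_of_finite fun c => isClosed_closure.smul _)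
    rintro _ ⟨g, rfl⟩
    obtain ⟨h, hh⟩ := QuotientGroup.mk_out_eq_mul H g
    refine Set.mem_iUnion.mpr ⟨g, ?_⟩
    rw [Set.mem_smul_set_iff_inv_smul_mem, hh, mul_inv_rev, mul_smul, inv_smul_smul]
    exact subset_closure ⟨h⁻¹, rfl⟩
  obtain ⟨c, hc⟩ := Set.mem_iUnion.mp (hcover (Set.mem_univ z))
  exact ⟨c.out⁻¹, Set.mem_smul_set_iff_inv_smul_mem.mp hc⟩

end Orbits

theorem ResiduallyFinite.of_group {G : Type*} [Group G] [Group.ResiduallyFinite G] :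
    ResiduallyFinite G := fun g hg =>
  let ⟨H, hH⟩ := Group.exists_finiteIndexNormalSubgroup_notMem g hg
  ⟨H.toSubgroup, H.isNormal', H.isFiniteIndex'.index_ne_zero, hH⟩

theorem ofReal_le_ediamD_s18 {X : Type*} (d : X → X → ℝ) {s : Set X} {x y : X} (hx : x ∈ s)
    (hy : y ∈ s) : ENNReal.ofReal (d x y) ≤ ediamD d s :=
  le_iSup₂_of_le (⟨x, hx⟩ : s) (⟨y, hy⟩ : s) le_rfl

section Metric

variable {X : Type*} [PseudoMetricSpace X]

theorem Metric.exists_pos_forall_lt_dist {s t : Set X} (hs : IsCompact s) (ht : IsClosed t)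
    (hst : Disjoint s t) : ∃ r > 0, ∀ x ∈ s, ∀ y ∈ t, r < dist x y := by
  obtain ⟨r, hr, h⟩ := Metric.exists_pos_forall_lt_edist hs ht hst
  refine ⟨r, hr, fun x hx y hy => ?_⟩
  have := h x hx y hy
  rw [edist_nndist, ENNReal.coe_lt_coe] at this
  exact_mod_cast this

theorem forall_le_dist_or_forall_le_dist {s t : Set X} {r : ℝ}
    (hst : ∀ x ∈ s, ∀ y ∈ t, 2 * r ≤ dist x y) (q : X) :
    (∀ x ∈ s, r ≤ dist q x) ∨ ∀ y ∈ t, r ≤ dist q y := by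
  rw [or_iff_not_imp_left]
  push Not
  rintro ⟨x, hx, hqx⟩ y hy
  linarith [hst x hx y hy, dist_triangle_left x y q]

variable {G : Type*} [Group G] [MulAction G X] [ContinuousConstSMul G X]

theorem MulAction.exists_mem_stabilizer_lt_dist_smul {q y c : X} {r : ℝ} (hr : 0 < r)
    (hq : (orbit G q).Finite) (hy : Dense (orbit G y))
    (hc : ∀ z ∈ orbit G c, 2 * r ≤ dist q z) :
    ∃ g ∈ stabilizer G q, r < dist (g • y) q := by
  have := finiteIndex_stabilizer hq
  obtain ⟨g, hg⟩ := exists_smul_mem_closure_orbit_subgroup (stabilizer G q) hy c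
  obtain ⟨_, ⟨h, rfl⟩, hdist : dist (g • c) ((h : G) • y) < r⟩ :=
    Metric.mem_closure_iff.mp hg r hr
  refine ⟨h, h.2, ?_⟩
  linarith [hc _ (mem_orbit c g), dist_triangle_right q (g • c) ((h : G) • y),
    dist_comm ((h : G) • y) q]

end Metric

section Chaotic

variable {G X : Type*} [Group G] [MulAction G X] [TopologicalSpace X]

theorem Chaotic.dense_setOf_isClosed_orbit (h : Chaotic G X) :
    Dense {x : X | IsClosed (orbit G x)} := by
  convert h.2 using 1
  ext z
  simp only [Set.mem_iUnion, exists_prop]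
  refine ⟨fun hz => ⟨z, hz, mem_orbit_self z⟩, ?_⟩
  rintro ⟨x, hx, hzx⟩
  show IsClosed (orbit G z)
  rwa [orbit_eq_iff.mpr hzx]

theorem Chaotic.dense_setOf_finite_orbit [Countable G] [CompactSpace X] [T2Space X]
    [ContinuousConstSMul G X] (h : Chaotic G X) : Dense {x : X | (orbit G x).Finite} :=
  h.dense_setOf_isClosed_orbit.mono fun _ => finite_orbit_of_isClosed

theorem Chaotic.exists_disjoint_isClosed_orbits (h : Chaotic G X) : ∃ a b : X,
    IsClosed (orbit G a) ∧ IsClosed (orbit G b) ∧ Disjoint (orbit G a) (orbit G b) := by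
  obtain ⟨x₀, -, hx₀⟩ := h.1
  have : Nonempty X := ⟨x₀⟩
  obtain ⟨a, ha⟩ := h.dense_setOf_isClosed_orbit.nonempty
  by_contra! hne
  have hsub : {x : X | IsClosed (orbit G x)} ⊆ orbit G a := fun b hb =>
    orbit_eq_iff.mp ((orbit.eq_or_disjoint b a).resolve_right (hne b a hb ha))
  have huniv : orbit G a = Set.univ := by
    rw [← ha.closure_eq, (h.dense_setOf_isClosed_orbit.mono hsub).closure_eq]
  exact hx₀ (orbit_eq_iff.mpr (huniv ▸ Set.mem_univ x₀) ▸ ha)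

end Chaotic

theorem Chaotic.sensitiveOn_dist {G X : Type*} [Group G] [Countable G] [MulAction G X]
    [MetricSpace X] [CompactSpace X] [ContinuousConstSMul G X] (h : Chaotic G X) :
    SensitiveOn G (dist : X → X → ℝ) := by
  obtain ⟨a, b, ha, hb, hab⟩ := h.exists_disjoint_isClosed_orbits
  obtain ⟨δ, hδ, hsep⟩ := Metric.exists_pos_forall_lt_dist ha.isCompact hb hab
  refine ⟨δ / 4, by positivity, fun U hU hUne => ?_⟩
  obtain ⟨q, hq, hqU⟩ := h.dense_setOf_finite_orbit.exists_mem_open hU hUne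
  obtain ⟨x₀, hx₀, -⟩ := h.1
  obtain ⟨y, hy, hyU⟩ := hx₀.exists_mem_open hU hUne
  rw [← orbit_eq_iff.mpr hy] at hx₀
  obtain ⟨c, hc⟩ : ∃ c, ∀ z ∈ orbit G c, 2 * (δ / 4) ≤ dist q z :=
    (forall_le_dist_or_forall_le_dist (fun x hx y hy => by linarith [hsep x hx y hy]) q).elim
      (⟨a, ·⟩) (⟨b, ·⟩)
  obtain ⟨g, hgq, hgy⟩ := exists_mem_stabilizer_lt_dist_smul (by positivity) hq hx₀ hc
  refine ⟨g, (ENNReal.ofReal_le_ofReal hgy.le).trans (ofReal_le_ediamD_s18 dist ?_ ?_)⟩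
  · exact Set.smul_mem_smul_set hyU
  · exact mem_stabilizer_iff.mp hgq ▸ Set.smul_mem_smul_set hqU

/-- If a countable group `G` acting faithfully by homeomorphisms on a compact metrizable
space `X` is chaotic, then `G` is residually finite and sensitive to initial conditions
with respect to every metric inducing the topology of `X`. -/
theorem residuallyFinite_and_sensitive_of_chaotic {G X : Type*} [Group G] [Countable G]
    [MulAction G X] [FaithfulSMul G X] [TopologicalSpace X] [CompactSpace X]
    [TopologicalSpace.MetrizableSpace X]
    (hcont : ∀ g : G, Continuous fun x : X => g • x)
    (hchaos : Chaotic G X) :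
    ResiduallyFinite G ∧
    ∀ ρ : X → X → ℝ,
      (∀ x y, ρ x y = ρ y x) →
      (∀ x y, ρ x y = 0 ↔ x = y) →
      (∀ x y z, ρ x z ≤ ρ x y + ρ y z) →
      (∀ s : Set X, IsOpen s ↔ ∀ x ∈ s, ∃ ε > 0, ∀ y, ρ x y < ε → y ∈ s) →
      SensitiveOn G ρ := by
  have : ContinuousConstSMul G X := ⟨hcont⟩
  refine ⟨?_, fun ρ hsymm hzero htri htop => ?_⟩
  · have := Group.residuallyFinite_of_dense_finite_orbits hchaos.dense_setOf_finite_orbit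
    exact ResiduallyFinite.of_group
  · let := MetricSpace.ofDistTopology ρ (fun x => (hzero x x).mpr rfl) hsymm htri htop
      fun x y => (hzero x y).mp
    exact hchaos.sensitiveOn_dist
end
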